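/- For n ≥ 3, the group Iso(n) of isometries of the metric space (Sym(n), d_H) has order 2·(n!)². -/

import Mathlib

/-!
The maps `φ ↦ g * φ * h` and `φ ↦ g * φ⁻¹ * h` are isometries, and they are pairwise distinct
because `Sym(n)` has trivial centre and is not abelian for `n ≥ 3`.

Conversely let `u` be an isometry; after a left translation `u 1 = 1`, so `u` preserves
`d(φ, 1) = |supp φ|` and permutes the transpositions. Two transpositions are at distance 3 or 4
according as they meet or not, and three pairwise meeting ones are the sides of a triangle exactly
when some 3-cycle is at distance 2 from each of them. Hence the images of the transpositions
`(a x)` all pass through one point `π a`, and `u (a b) = (π a π b)` for a permutation `π`. After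
conjugating by `π`, `u` fixes every transposition, and comparing the distances of `φ` and `u φ`
to `1` and to `(a b)` forces `(u φ) a ∈ {φ a, φ⁻¹ a}`. So `u` fixes or inverts each 3-cycle,
the same way for all of them, and then, up to inversion, the 3-cycle `φ⁻¹ a → a → φ a`
distinguishes `φ` from any `u φ` disagreeing with it at `a`.
-/

/-- The Hamming distance between two permutations of `Fin n`. -/
def hdist {n : ℕ} (φ ψ : Equiv.Perm (Fin n)) : ℕ :=
  (Finset.univ.filter fun i => φ i ≠ ψ i).card

open Equiv Finset

namespace Equiv

lemma swap_right_injective {α : Type*} [DecidableEq α] (a : α) :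
    Function.Injective (swap a) := fun b c h => by
  simpa using congrArg (· a) h

end Equiv

namespace Equiv.Perm

variable {α : Type*}

section Swap

variable [DecidableEq α] [Fintype α] {σ : Perm α}

lemma IsSwap.exists_eq_swap_of_mem_support (hσ : σ.IsSwap) {p : α} (hp : p ∈ σ.support) :
    ∃ w, w ≠ p ∧ σ = swap p w := by
  obtain ⟨x, y, hxy, rfl⟩ := hσ
  rw [support_swap hxy, mem_insert, mem_singleton] at hp
  rcases hp with rfl | rfl
  · exact ⟨y, hxy.symm, rfl⟩
  · exact ⟨x, hxy, swap_comm _ _⟩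

lemma IsSwap.eq_swap_of_mem_support (hσ : σ.IsSwap) {x y : α} (hxy : x ≠ y)
    (hx : x ∈ σ.support) (hy : y ∈ σ.support) : σ = swap x y := by
  obtain ⟨w, hw, rfl⟩ := hσ.exists_eq_swap_of_mem_support hx
  rw [support_swap hw.symm, mem_insert, mem_singleton] at hy
  rcases hy with rfl | rfl
  · exact absurd rfl hxy
  · rfl

end Swap

section Cycle3

variable [DecidableEq α] {x y z : α}

def cycle3 (x y z : α) : Perm α := swap x y * swap y z

lemma cycle3_apply_left (hxy : x ≠ y) (hxz : x ≠ z) : cycle3 x y z x = y := by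
  simp [cycle3, swap_apply_of_ne_of_ne hxy hxz]

lemma cycle3_apply_mid (hxz : x ≠ z) (hyz : y ≠ z) : cycle3 x y z y = z := by
  simp [cycle3, swap_apply_of_ne_of_ne hxz.symm hyz.symm]

lemma cycle3_apply_right : cycle3 x y z z = x := by
  simp [cycle3]

lemma cycle3_apply_of_ne {w : α} (hwx : w ≠ x) (hwy : w ≠ y) (hwz : w ≠ z) :
    cycle3 x y z w = w := by
  simp [cycle3, swap_apply_of_ne_of_ne, *]

lemma cycle3_rotate (hxy : x ≠ y) (hxz : x ≠ z) (hyz : y ≠ z) :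
    cycle3 x y z = cycle3 y z x := by
  ext w
  simp only [cycle3, Perm.mul_apply, swap_apply_def]
  split_ifs <;> simp_all

lemma inv_cycle3 (hxy : x ≠ y) (hxz : x ≠ z) (hyz : y ≠ z) :
    (cycle3 x y z)⁻¹ = cycle3 x z y := by
  rw [inv_eq_iff_mul_eq_one]
  ext w
  simp only [cycle3, Perm.mul_apply, swap_apply_def, Perm.one_apply]
  split_ifs <;> simp_all

lemma support_cycle3 [Fintype α] (hxy : x ≠ y) (hxz : x ≠ z) (hyz : y ≠ z) :
    (cycle3 x y z).support = {x, y, z} :=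
  support_swap_mul_swap (by simp [hxy, hxz, hyz])

lemma card_support_cycle3 [Fintype α] (hxy : x ≠ y) (hxz : x ≠ z) (hyz : y ≠ z) :
    #(cycle3 x y z).support = 3 := by
  rw [support_cycle3 hxy hxz hyz, card_insert_of_notMem (by simp [hxy, hxz]), card_pair hyz]

lemma eq_cycle3_of_forall_apply (hxy : x ≠ y) (hxz : x ≠ z) (hyz : y ≠ z) {ψ : Perm α}
    (hψ : ∀ i, ψ i = cycle3 x y z i ∨ ψ i = cycle3 x z y i) (hx : ψ x = y) :
    ψ = cycle3 x y z := by
  have hy := hψ y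
  have hz := hψ z
  rw [cycle3_apply_mid hxz hyz, cycle3_apply_right] at hy
  rw [cycle3_apply_right, cycle3_apply_mid hxy hyz.symm] at hz
  have hz' : ψ z = x := hz.resolve_right fun h => hxz (ψ.injective (hx.trans h.symm))
  have hy' : ψ y = z := hy.resolve_right fun h => hyz (ψ.injective (h.trans hz'.symm))
  ext i
  rcases eq_or_ne i x with rfl | hix
  · rw [hx, cycle3_apply_left hxy hxz]
  rcases eq_or_ne i y with rfl | hiy
  · rw [hy', cycle3_apply_mid hxz hyz]
  rcases eq_or_ne i z with rfl | hiz
  · rw [hz', cycle3_apply_right]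
  rw [cycle3_apply_of_ne hix hiy hiz]
  rcases hψ i with h | h
  · rwa [cycle3_apply_of_ne hix hiy hiz] at h
  · rwa [cycle3_apply_of_ne hix hiz hiy] at h

end Cycle3

section Group

variable [Finite α]

lemma eq_one_of_forall_commute (hα : 3 ≤ Nat.card α) {c : Perm α}
    (hc : ∀ φ, c * φ = φ * c) : c = 1 := by
  classical
  have hα : 3 ≤ ENat.card α := by rw [ENat.card_eq_coe_natCard]; exact_mod_cast hα
  refine Equiv.ext fun a => ?_
  have key {x : α} (hxa : x ≠ a) : c a = a ∨ c a = x := by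
    have := congrArg (· a) (hc (swap a x))
    simp only [Perm.mul_apply, swap_apply_left] at this
    by_contra! h
    rw [swap_apply_of_ne_of_ne h.1 h.2] at this
    exact hxa (c.injective this)
  obtain ⟨b, hba, -⟩ := ENat.exists_ne_ne_of_three_le hα a a
  obtain ⟨d, hda, hdb⟩ := ENat.exists_ne_ne_of_three_le hα a b
  rcases key hba with ha | hb
  · exact ha
  rcases key hda with ha | hd
  · exact ha
  exact absurd (hd.symm.trans hb) hdb

lemma eq_and_eq_of_forall_mul_mul_eq (hα : 3 ≤ Nat.card α) {g h g' h' : Perm α}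
    (H : ∀ φ, g * φ * h = g' * φ * h') : g = g' ∧ h = h' := by
  have hc (φ : Perm α) : g'⁻¹ * g * φ = φ * (g'⁻¹ * g) :=
    calc g'⁻¹ * g * φ = g'⁻¹ * (g * φ * h) * h⁻¹ := by group
      _ = φ * (g'⁻¹ * (g' * 1 * h') * h⁻¹) := by rw [H φ]; group
      _ = φ * (g'⁻¹ * g) := by rw [← H 1]; group
  obtain rfl : g = g' := (inv_mul_eq_one.1 (eq_one_of_forall_commute hα hc)).symm
  exact ⟨rfl, by simpa using H 1⟩

lemma not_forall_mul_mul_eq_mul_inv_mul (hα : 3 ≤ Nat.card α) {g h g' h' : Perm α} :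
    ¬∀ φ, g * φ * h = g' * φ⁻¹ * h' := by
  intro H
  have hd (φ : Perm α) : φ⁻¹ = g'⁻¹ * g * φ * (h * h'⁻¹) :=
    calc φ⁻¹ = g'⁻¹ * (g' * φ⁻¹ * h') * h'⁻¹ := by group
      _ = g'⁻¹ * g * φ * (h * h'⁻¹) := by rw [← H φ]; group
  have hd₁ : h * h'⁻¹ = (g'⁻¹ * g)⁻¹ := eq_inv_of_mul_eq_one_right (by simpa using (hd 1).symm)
  obtain ⟨c, hconj⟩ : ∃ c : Perm α, ∀ φ, φ⁻¹ = c * φ * c⁻¹ :=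
    ⟨g'⁻¹ * g, fun φ => by rw [hd φ, hd₁]⟩
  -- inversion would be an automorphism, making `Perm α` commutative
  have : IsMulCommutative (Perm α) := ⟨⟨fun φ ψ => inv_injective <|
    calc (φ * ψ)⁻¹ = (c * φ * c⁻¹) * (c * ψ * c⁻¹) := by rw [hconj]; group
      _ = (ψ * φ)⁻¹ := by rw [← hconj, ← hconj, mul_inv_rev]⟩⟩
  have := isMulCommutative_iff_card_le_two.1 this
  omega

end Group

end Equiv.Perm

open Equiv.Perm

section HammingDistance

variable {n : ℕ}

lemma hdist_eq_card_support (φ ψ : Perm (Fin n)) : hdist φ ψ = #(ψ⁻¹ * φ).support := by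
  unfold hdist
  congr 1
  ext i
  simp [Equiv.symm_apply_eq]

lemma hdist_eq_zero_iff {φ ψ : Perm (Fin n)} : hdist φ ψ = 0 ↔ φ = ψ := by
  rw [hdist_eq_card_support, card_eq_zero, support_eq_empty_iff, inv_mul_eq_one, eq_comm]

lemma hdist_one_right (φ : Perm (Fin n)) : hdist φ 1 = #φ.support := by
  simp [hdist_eq_card_support]

lemma hdist_mul_left (g φ ψ : Perm (Fin n)) : hdist (g * φ) (g * ψ) = hdist φ ψ := by
  simp [hdist_eq_card_support, mul_assoc]

lemma hdist_mul_right (h φ ψ : Perm (Fin n)) : hdist (φ * h) (ψ * h) = hdist φ ψ := by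
  have : (ψ * h)⁻¹ * (φ * h) = h⁻¹ * (ψ⁻¹ * φ) * h⁻¹⁻¹ := by group
  rw [hdist_eq_card_support, hdist_eq_card_support, this, card_support_conj]

lemma hdist_inv_inv (φ ψ : Perm (Fin n)) : hdist φ⁻¹ ψ⁻¹ = hdist φ ψ := by
  have : ψ⁻¹⁻¹ * φ⁻¹ = φ * (ψ⁻¹ * φ)⁻¹ * φ⁻¹ := by group
  rw [hdist_eq_card_support, hdist_eq_card_support, this, card_support_conj, support_inv]

lemma hdist_eq_card_filter {s : Finset (Fin n)} {φ ψ : Perm (Fin n)} (hφ : φ.support ⊆ s)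
    (hψ : ψ.support ⊆ s) : hdist φ ψ = #{i ∈ s | φ i ≠ ψ i} := by
  unfold hdist
  congr 1
  ext i
  simp only [mem_filter, mem_univ, true_and]
  refine ⟨fun h => ⟨?_, h⟩, And.right⟩
  by_contra hi
  exact h ((notMem_support.1 fun h' => hi (hφ h')).trans
    (notMem_support.1 fun h' => hi (hψ h')).symm)

lemma card_sdiff_support_add_le_hdist (σ τ : Perm (Fin n)) :
    #(σ.support \ τ.support) + #(τ.support \ σ.support) ≤ hdist σ τ := by
  rw [← card_union_of_disjoint disjoint_sdiff_sdiff]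
  refine card_le_card fun i hi => ?_
  simp only [mem_union, mem_sdiff, mem_support, not_not] at hi
  simp only [mem_filter, mem_univ, true_and]
  rcases hi with ⟨hσ, hτ⟩ | ⟨hτ, hσ⟩
  · rwa [hτ]
  · rw [hσ]; exact Ne.symm hτ

lemma support_subset_of_hdist_lt {σ τ : Perm (Fin n)}
    (h : hdist σ τ + #τ.support < #σ.support + 2) : τ.support ⊆ σ.support := by
  intro t ht
  by_contra htσ
  have hinter : #(τ.support ∩ σ.support) < #τ.support :=
    card_lt_card ⟨inter_subset_left, fun hsub => htσ (mem_of_mem_inter_right (hsub ht))⟩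
  have hsum := card_sdiff_support_add_le_hdist σ τ
  have hσ := card_sdiff_add_card_inter σ.support τ.support
  have hτ := card_sdiff_add_card_inter τ.support σ.support
  rw [inter_comm] at hσ
  omega

lemma hdist_one_sub_hdist (χ γ : Perm (Fin n)) :
    (hdist χ 1 : ℤ) - hdist χ γ =
      ∑ i ∈ γ.support, ((if χ i = γ i then 1 else 0) - if χ i = i then 1 else 0) := by
  have hcast (ψ : Perm (Fin n)) : (hdist χ ψ : ℤ) = ∑ i, if χ i = ψ i then 0 else 1 := by
    simp only [hdist, natCast_card_filter, ite_not]
  rw [hcast, hcast, ← sum_sub_distrib,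
    ← sum_subset (subset_univ γ.support) fun i _ hi => by
      simp only [notMem_support.1 hi, one_apply]; split_ifs <;> rfl]
  refine sum_congr rfl fun i _ => ?_
  simp only [one_apply]
  split_ifs <;> norm_num

variable {a b c d : Fin n}

lemma hdist_one_sub_hdist_swap (χ : Perm (Fin n)) (hab : a ≠ b) :
    (hdist χ 1 : ℤ) - hdist χ (swap a b) =
      ((if χ a = b then 1 else 0) - if χ a = a then 1 else 0) +
        ((if χ b = a then 1 else 0) - if χ b = b then 1 else 0) := by
  rw [hdist_one_sub_hdist, support_swap hab, sum_pair hab, swap_apply_left, swap_apply_right]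

lemma hdist_one_sub_hdist_cycle3 (χ : Perm (Fin n)) (hab : a ≠ b) (hac : a ≠ c) (hbc : b ≠ c) :
    (hdist χ 1 : ℤ) - hdist χ (cycle3 a b c) =
      ((if χ a = b then 1 else 0) - if χ a = a then 1 else 0) +
        (((if χ b = c then 1 else 0) - if χ b = b then 1 else 0) +
          ((if χ c = a then 1 else 0) - if χ c = c then 1 else 0)) := by
  rw [hdist_one_sub_hdist, support_cycle3 hab hac hbc, sum_insert (by simp [hab, hac]),
    sum_pair hbc, cycle3_apply_left hab hac, cycle3_apply_mid hac hbc, cycle3_apply_right]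

lemma hdist_swap_swap_same (hab : a ≠ b) (hac : a ≠ c) (hbc : b ≠ c) :
    hdist (swap a b) (swap a c) = 3 := by
  rw [hdist_eq_card_support, swap_inv,
    (isThreeCycle_swap_mul_swap_same hac hab hbc.symm).card_support]

lemma hdist_swap_swap_of_disjoint (hab : a ≠ b) (hcd : c ≠ d) (hac : a ≠ c) (had : a ≠ d)
    (hbc : b ≠ c) (hbd : b ≠ d) : hdist (swap a b) (swap c d) = 4 := by
  rw [hdist_eq_card_filter (s := {a, b, c, d}) (by simp [support_swap hab, insert_subset_iff])
    (by simp [support_swap hcd, insert_subset_iff])]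
  simp [filter_insert, filter_singleton, swap_apply_of_ne_of_ne, hab, hcd, hac, had, hbc, hbd,
    hab.symm, hcd.symm, hac.symm, had.symm, hbc.symm, hbd.symm]

lemma exists_mem_support_of_hdist_eq_three {σ τ : Perm (Fin n)} (hσ : σ.IsSwap)
    (hτ : τ.IsSwap) (h : hdist σ τ = 3) : ∃ p, p ∈ σ.support ∧ p ∈ τ.support := by
  obtain ⟨a, b, hab, rfl⟩ := hσ
  obtain ⟨c, d, hcd, rfl⟩ := hτ
  by_contra! hne
  simp only [support_swap hab, support_swap hcd, mem_insert, mem_singleton] at hne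
  rw [hdist_swap_swap_of_disjoint hab hcd (fun h => hne a (by simp) (by simp [h]))
    (fun h => hne a (by simp) (by simp [h])) (fun h => hne b (by simp) (by simp [h]))
    (fun h => hne b (by simp) (by simp [h]))] at h
  omega

lemma hdist_cycle3_swap (hab : a ≠ b) (hac : a ≠ c) (hbc : b ≠ c) :
    hdist (cycle3 a b c) (swap a b) = 2 := by
  rw [hdist_eq_card_filter (s := {a, b, c}) (support_cycle3 hab hac hbc).le
    (by simp [support_swap hab, insert_subset_iff])]
  simp [filter_insert, filter_singleton, swap_apply_of_ne_of_ne, cycle3_apply_left,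
    cycle3_apply_mid, cycle3_apply_right, hab, hac, hbc, hac.symm, hbc.symm]

lemma hdist_cycle3_cycle3 (hab : a ≠ b) (hac : a ≠ c) (had : a ≠ d) (hbc : b ≠ c) (hbd : b ≠ d)
    (hcd : c ≠ d) : hdist (cycle3 a b c) (cycle3 a b d) = 3 := by
  rw [hdist_eq_card_filter (s := {a, b, c, d})
    (by simp [support_cycle3 hab hac hbc, insert_subset_iff])
    (by simp [support_cycle3 hab had hbd, insert_subset_iff])]
  simp [filter_insert, filter_singleton, cycle3_apply_left, cycle3_apply_mid, cycle3_apply_right,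
    cycle3_apply_of_ne, hab, hac, had, hbc, hbd, hcd, hac.symm, had.symm, hbc.symm, hbd.symm,
    hcd.symm]

lemma hdist_cycle3_cycle3_inv (hab : a ≠ b) (hac : a ≠ c) (had : a ≠ d) (hbc : b ≠ c)
    (hbd : b ≠ d) (hcd : c ≠ d) : hdist (cycle3 a b c) (cycle3 a b d)⁻¹ = 4 := by
  rw [inv_cycle3 hab had hbd, hdist_eq_card_filter (s := {a, b, c, d})
    (by simp [support_cycle3 hab hac hbc, insert_subset_iff])
    (by simp [support_cycle3 had hab hbd.symm, insert_subset_iff])]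
  simp [filter_insert, filter_singleton, cycle3_apply_left, cycle3_apply_mid, cycle3_apply_right,
    cycle3_apply_of_ne, hab, hac, had, hbc, hbd, hcd, hac.symm, had.symm, hbc.symm, hbd.symm,
    hcd.symm]

/-- For transpositions this says that their supports are the sides of a triangle, the 3-cycle
on its vertices being the witness `σ`. -/
def IsTriangle (τ₁ τ₂ τ₃ : Perm (Fin n)) : Prop :=
  ∃ σ, hdist σ 1 = 3 ∧ hdist σ τ₁ = 2 ∧ hdist σ τ₂ = 2 ∧ hdist σ τ₃ = 2

lemma isTriangle_swap (hab : a ≠ b) (hac : a ≠ c) (hbc : b ≠ c) :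
    IsTriangle (swap a b) (swap a c) (swap b c) := by
  refine ⟨cycle3 a b c, ?_, hdist_cycle3_swap hab hac hbc, ?_, ?_⟩
  · rw [hdist_one_right, card_support_cycle3 hab hac hbc]
  · rw [cycle3_rotate hab hac hbc, cycle3_rotate hbc hab.symm hac.symm, swap_comm]
    exact hdist_cycle3_swap hac.symm hbc.symm hab
  · rw [cycle3_rotate hab hac hbc]
    exact hdist_cycle3_swap hbc hab.symm hac.symm

lemma not_isTriangle_swap (hab : a ≠ b) (hac : a ≠ c) (had : a ≠ d) (hbc : b ≠ c) (hbd : b ≠ d)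
    (hcd : c ≠ d) : ¬IsTriangle (swap a b) (swap a c) (swap a d) := by
  rintro ⟨σ, h1, hb, hc, hd⟩
  rw [hdist_one_right] at h1
  have hsub {x : Fin n} (hax : a ≠ x) (h : hdist σ (swap a x) = 2) : {a, x} ⊆ σ.support := by
    rw [← support_swap hax]
    exact support_subset_of_hdist_lt (by rw [h, card_support_swap hax, h1]; norm_num)
  have : ({a, b, c, d} : Finset (Fin n)) ⊆ σ.support := by
    simp only [insert_subset_iff, singleton_subset_iff] at hsub ⊢
    exact ⟨(hsub hab hb).1, (hsub hab hb).2, (hsub hac hc).2, (hsub had hd).2⟩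
  have := card_le_card this
  rw [h1, card_insert_of_notMem (by simp [hab, hac, had]),
    card_insert_of_notMem (by simp [hbc, hbd]), card_pair hcd] at this
  omega

end HammingDistance

def IsHammingIsometry {n : ℕ} (u : Perm (Fin n) → Perm (Fin n)) : Prop :=
  ∀ φ ψ, hdist (u φ) (u ψ) = hdist φ ψ

namespace IsHammingIsometry

variable {n : ℕ} {u : Perm (Fin n) → Perm (Fin n)}

lemma mul_mul (hu : IsHammingIsometry u) (g h : Perm (Fin n)) :
    IsHammingIsometry fun φ => g * u φ * h := fun φ ψ => by
  rw [hdist_mul_right, hdist_mul_left, hu]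

lemma inv (hu : IsHammingIsometry u) : IsHammingIsometry fun φ => (u φ)⁻¹ := fun φ ψ => by
  rw [hdist_inv_inv, hu]

lemma injective (hu : IsHammingIsometry u) : Function.Injective u := fun φ ψ h =>
  hdist_eq_zero_iff.1 (by rw [← hu, h, hdist_eq_zero_iff])

lemma surjective (hu : IsHammingIsometry u) : Function.Surjective u :=
  Finite.injective_iff_surjective.1 hu.injective

lemma hdist_map_left_of_map_eq (hu : IsHammingIsometry u) {γ : Perm (Fin n)} (hγ : u γ = γ)
    (φ : Perm (Fin n)) : hdist (u φ) γ = hdist φ γ := by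
  rw [← hu φ γ, hγ]

section MapOne

variable (hu : IsHammingIsometry u) (h1 : u 1 = 1)
include hu h1

lemma card_support (φ : Perm (Fin n)) : #(u φ).support = #φ.support := by
  rw [← hdist_one_right, ← hdist_one_right, ← hu φ 1, h1]

lemma isSwap {a b : Fin n} (hab : a ≠ b) : (u (swap a b)).IsSwap := by
  rw [← card_support_eq_two, hu.card_support h1, card_support_swap hab]

lemma isTriangle_iff {τ₁ τ₂ τ₃ : Perm (Fin n)} :
    IsTriangle (u τ₁) (u τ₂) (u τ₃) ↔ IsTriangle τ₁ τ₂ τ₃ := by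
  constructor
  · rintro ⟨σ, hσ⟩
    obtain ⟨σ, rfl⟩ := hu.surjective σ
    rw [← h1, hu, hu, hu, hu] at hσ
    exact ⟨σ, hσ⟩
  · rintro ⟨σ, hσ⟩
    refine ⟨u σ, ?_⟩
    rwa [← h1, hu, hu, hu, hu]

lemma exists_mem_support_map_swap (hn : 3 ≤ n) (a : Fin n) :
    ∃ p, ∀ x, x ≠ a → p ∈ (u (swap a x)).support := by
  obtain ⟨b, hba, -⟩ := ENat.exists_ne_ne_of_three_le (by simpa using hn) a a
  obtain ⟨c, hca, hcb⟩ := ENat.exists_ne_ne_of_three_le (by simpa using hn) a b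
  obtain ⟨p, hpb, hpc⟩ := exists_mem_support_of_hdist_eq_three (hu.isSwap h1 hba.symm)
    (hu.isSwap h1 hca.symm) (by rw [hu]; exact hdist_swap_swap_same hba.symm hca.symm hcb.symm)
  obtain ⟨q₁, hq₁, hb⟩ := (hu.isSwap h1 hba.symm).exists_eq_swap_of_mem_support hpb
  obtain ⟨q₂, hq₂, hc⟩ := (hu.isSwap h1 hca.symm).exists_eq_swap_of_mem_support hpc
  refine ⟨p, fun x hxa => ?_⟩
  by_cases hxb : x = b
  · rwa [hxb]
  by_cases hxc : x = c
  · rwa [hxc]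
  by_contra hpx
  -- `u (swap a x)` meets both `swap p q₁` and `swap p q₂` but avoids `p`
  have hmem {y q : Fin n} (hya : y ≠ a) (hyx : y ≠ x) (hq : q ≠ p)
      (hy : u (swap a y) = swap p q) : q ∈ (u (swap a x)).support := by
    obtain ⟨m, hmx, hmy⟩ := exists_mem_support_of_hdist_eq_three (hu.isSwap h1 hxa.symm)
      (hu.isSwap h1 hya.symm) (by rw [hu]; exact hdist_swap_swap_same hxa.symm hya.symm hyx.symm)
    rw [hy, support_swap hq.symm, mem_insert, mem_singleton] at hmy
    rcases hmy with rfl | rfl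
    · exact absurd hmx hpx
    · exact hmx
  have hq₁₂ : q₁ ≠ q₂ := by
    rintro rfl
    exact hcb (swap_right_injective a (hu.injective (hb.trans hc.symm))).symm
  have hx : u (swap a x) = swap q₁ q₂ := (hu.isSwap h1 hxa.symm).eq_swap_of_mem_support hq₁₂
    (hmem hba (Ne.symm hxb) hq₁ hb) (hmem hca (Ne.symm hxc) hq₂ hc)
  apply not_isTriangle_swap hba.symm hca.symm (Ne.symm hxa) (Ne.symm hcb) (Ne.symm hxb)
    (Ne.symm hxc)
  rw [← hu.isTriangle_iff h1, hb, hc, hx]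
  exact isTriangle_swap hq₁.symm hq₂.symm hq₁₂

lemma eq_of_mem_support_map_swap (hn : 3 ≤ n) {a a' p : Fin n}
    (hp : ∀ x, x ≠ a → p ∈ (u (swap a x)).support)
    (hp' : ∀ x, x ≠ a' → p ∈ (u (swap a' x)).support) : a = a' := by
  by_contra haa'
  obtain ⟨e, hea, hea'⟩ := ENat.exists_ne_ne_of_three_le (by simpa using hn) a a'
  obtain ⟨w, hw, h₀⟩ := (hu.isSwap h1 haa').exists_eq_swap_of_mem_support (hp a' (Ne.symm haa'))
  obtain ⟨v₁, hv₁, h₁⟩ := (hu.isSwap h1 (Ne.symm hea)).exists_eq_swap_of_mem_support (hp e hea)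
  obtain ⟨v₂, hv₂, h₂⟩ := (hu.isSwap h1 (Ne.symm hea')).exists_eq_swap_of_mem_support (hp' e hea')
  have hwv₁ : w ≠ v₁ := by
    rintro rfl
    exact hea' (swap_right_injective a (hu.injective (h₀.trans h₁.symm))).symm
  have hwv₂ : w ≠ v₂ := by
    rintro rfl
    rw [← h₂, swap_comm] at h₀
    exact hea (swap_right_injective a' (hu.injective h₀)).symm
  have hv₁₂ : v₁ ≠ v₂ := by
    rintro rfl
    rw [← h₂, swap_comm, swap_comm a'] at h₁
    exact haa' (swap_right_injective e (hu.injective h₁))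
  apply not_isTriangle_swap hw.symm hv₁.symm hv₂.symm hwv₁ hwv₂ hv₁₂
  rw [← h₀, ← h₁, ← h₂, hu.isTriangle_iff h1]
  exact isTriangle_swap haa' (Ne.symm hea) (Ne.symm hea')

lemma exists_perm_map_swap (hn : 3 ≤ n) :
    ∃ π : Perm (Fin n), ∀ a b, a ≠ b → u (swap a b) = swap (π a) (π b) := by
  choose π hπ using hu.exists_mem_support_map_swap h1 hn
  have hinj : Function.Injective π := fun a a' h =>
    hu.eq_of_mem_support_map_swap h1 hn (hπ a) (h ▸ hπ a')
  refine ⟨Equiv.ofBijective π (Finite.injective_iff_bijective.1 hinj), fun a b hab => ?_⟩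
  refine (hu.isSwap h1 hab).eq_swap_of_mem_support (hinj.ne hab) (hπ a b (Ne.symm hab)) ?_
  rw [swap_comm]
  exact hπ b a hab

end MapOne

section MapSwap

variable (hu : IsHammingIsometry u) (h1 : u 1 = 1)
  (hswap : ∀ a b : Fin n, a ≠ b → u (swap a b) = swap a b)
include hu h1 hswap

lemma apply_eq_or_eq_inv_apply (φ : Perm (Fin n)) (a : Fin n) :
    u φ a = φ a ∨ u φ a = φ⁻¹ a := by
  set ψ := u φ
  have key {b : Fin n} (hab : a ≠ b) :=
    calc (((if ψ a = b then 1 else 0) - if ψ a = a then 1 else 0) +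
          ((if ψ b = a then 1 else 0) - if ψ b = b then 1 else 0) : ℤ)
        = (hdist ψ 1 : ℤ) - hdist ψ (swap a b) := (hdist_one_sub_hdist_swap ψ hab).symm
      _ = (hdist φ 1 : ℤ) - hdist φ (swap a b) := by
        rw [hu.hdist_map_left_of_map_eq h1, hu.hdist_map_left_of_map_eq (hswap a b hab)]
      _ = ((if φ a = b then 1 else 0) - if φ a = a then 1 else 0) +
          ((if φ b = a then 1 else 0) - if φ b = b then 1 else 0) :=
        hdist_one_sub_hdist_swap φ hab
  rw [Perm.eq_inv_iff_eq]
  by_cases hψa : ψ a = a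
  · left
    rw [hψa]
    by_contra hφa
    have e := key hφa
    have : φ (φ a) ≠ φ a := fun h => hφa (φ.injective h).symm
    have : ψ (φ a) ≠ a := fun h => hφa (ψ.injective (h.trans hψa.symm)).symm
    split_ifs at e <;> omega
  · by_contra! hne
    have e := key (Ne.symm hψa)
    have : ψ (ψ a) ≠ ψ a := fun h => hψa (ψ.injective h)
    have : φ a ≠ ψ a := Ne.symm hne.1
    split_ifs at e <;> omega

lemma map_cycle3 {a b c : Fin n} (hab : a ≠ b) (hac : a ≠ c) (hbc : b ≠ c) :
    u (cycle3 a b c) = cycle3 a b c ∨ u (cycle3 a b c) = (cycle3 a b c)⁻¹ := by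
  have hψ (i : Fin n) := hu.apply_eq_or_eq_inv_apply h1 hswap (cycle3 a b c) i
  rw [inv_cycle3 hab hac hbc] at hψ ⊢
  rcases hψ a with ha | ha
  · exact .inl (eq_cycle3_of_forall_apply hab hac hbc hψ (ha.trans (cycle3_apply_left hab hac)))
  · exact .inr (eq_cycle3_of_forall_apply hac hab hbc.symm (fun i => (hψ i).symm)
      (ha.trans (cycle3_apply_left hac hab)))

lemma map_cycle3_eq_of_map_cycle3_eq {a b c d : Fin n} (hab : a ≠ b) (hac : a ≠ c) (had : a ≠ d)
    (hbc : b ≠ c) (hbd : b ≠ d) (hcd : c ≠ d) (h : u (cycle3 a b c) = cycle3 a b c) :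
    u (cycle3 a b d) = cycle3 a b d := by
  refine (hu.map_cycle3 h1 hswap hab had hbd).resolve_right fun h' => ?_
  have := hu (cycle3 a b c) (cycle3 a b d)
  rw [h, h', hdist_cycle3_cycle3_inv hab hac had hbc hbd hcd,
    hdist_cycle3_cycle3 hab hac had hbc hbd hcd] at this
  omega

lemma map_cycle3_swap_eq_of_map_cycle3_eq {a b c : Fin n} (hab : a ≠ b) (hac : a ≠ c)
    (hbc : b ≠ c) (h : u (cycle3 a b c) = cycle3 a b c) : u (cycle3 a c b) = cycle3 a c b := by
  refine (hu.map_cycle3 h1 hswap hac hab hbc.symm).resolve_right fun h' => hbc.symm ?_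
  rw [inv_cycle3 hac hab hbc.symm, ← h] at h'
  simpa [cycle3_apply_left hab hac, cycle3_apply_left hac hab] using
    congrArg (· a) (hu.injective h')

lemma forall_map_cycle3_eq_of_map_cycle3_eq (hn : 3 ≤ n) {x y z : Fin n} (hxy : x ≠ y)
    (hxz : x ≠ z) (hyz : y ≠ z) (h : u (cycle3 x y z) = cycle3 x y z) :
    ∀ a b c : Fin n, a ≠ b → a ≠ c → b ≠ c → u (cycle3 a b c) = cycle3 a b c := by
  let P (a b : Fin n) : Prop := ∀ c, a ≠ c → b ≠ c → u (cycle3 a b c) = cycle3 a b c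
  have hP {a b c : Fin n} (hab : a ≠ b) (hac : a ≠ c) (hbc : b ≠ c)
      (h : u (cycle3 a b c) = cycle3 a b c) : P a b := fun d had hbd => by
    rcases eq_or_ne c d with rfl | hcd
    · exact h
    · exact hu.map_cycle3_eq_of_map_cycle3_eq h1 hswap hab hac had hbc hbd hcd h
  have hstep {a b : Fin n} (hab : a ≠ b) (hPab : P a b) {c : Fin n} (hbc : b ≠ c) : P b c := by
    rcases eq_or_ne a c with rfl | hac
    · obtain ⟨d, hda, hdb⟩ := ENat.exists_ne_ne_of_three_le (by simpa using hn) a b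
      have := hu.map_cycle3_swap_eq_of_map_cycle3_eq h1 hswap hab hda.symm hdb.symm
        (hPab d hda.symm hdb.symm)
      rw [cycle3_rotate hda.symm hab hdb, cycle3_rotate hdb hda hab.symm] at this
      exact hP hbc hdb.symm hda.symm this
    · have := hPab c hac hbc
      rw [cycle3_rotate hab hac hbc] at this
      exact hP hbc hab.symm hac.symm this
  intro a b c hab hac hbc
  have hyx := hstep hxy (hP hxy hxz hyz h) hxy.symm
  rcases eq_or_ne x a with rfl | hxa
  · exact hstep hxy.symm hyx hab c hac hbc
  · exact hstep hxa (hstep hxy.symm hyx hxa) hab c hac hbc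

lemma eq_self_of_map_cycle3_eq
    (hcycle : ∀ a b c : Fin n, a ≠ b → a ≠ c → b ≠ c → u (cycle3 a b c) = cycle3 a b c)
    (φ : Perm (Fin n)) : u φ = φ := by
  refine Equiv.ext fun a => ?_
  set ψ := u φ
  by_contra hne
  have hψa : ψ a = φ⁻¹ a := (hu.apply_eq_or_eq_inv_apply h1 hswap φ a).resolve_left hne
  set y := φ a with hy
  set z := φ⁻¹ a with hz
  have hφz : φ z = a := by simp [z]
  have hay : a ≠ y := fun h => hne (by rw [hψa, ← h, hz, Perm.inv_eq_iff_eq, ← hy, h])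
  have haz : a ≠ z := fun h => hay (by rw [hy, h, hφz, ← h])
  have hyz : y ≠ z := fun h => hne (hψa.trans h.symm)
  -- `φ` follows the 3-cycle `z → a → y` at `z` and `a`, while `ψ` follows it at most at `z`
  have e :=
    calc (((if ψ z = a then 1 else 0) - if ψ z = z then 1 else 0) +
          (((if ψ a = y then 1 else 0) - if ψ a = a then 1 else 0) +
            ((if ψ y = z then 1 else 0) - if ψ y = y then 1 else 0)) : ℤ)
        = (hdist ψ 1 : ℤ) - hdist ψ (cycle3 z a y) :=
          (hdist_one_sub_hdist_cycle3 ψ haz.symm hyz.symm hay).symm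
      _ = (hdist φ 1 : ℤ) - hdist φ (cycle3 z a y) := by
        rw [hu.hdist_map_left_of_map_eq h1,
          hu.hdist_map_left_of_map_eq (hcycle z a y haz.symm hyz.symm hay)]
      _ = ((if φ z = a then 1 else 0) - if φ z = z then 1 else 0) +
          (((if φ a = y then 1 else 0) - if φ a = a then 1 else 0) +
            ((if φ y = z then 1 else 0) - if φ y = y then 1 else 0)) :=
        hdist_one_sub_hdist_cycle3 φ haz.symm hyz.symm hay
  have : φ y ≠ y := fun h => hay (φ.injective h).symm
  have : ψ z ≠ z := fun h => haz (ψ.injective (h.trans hψa.symm)).symm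
  have : ψ y ≠ z := fun h => hay (ψ.injective (h.trans hψa.symm)).symm
  have : ψ y ≠ y := by
    rcases hu.apply_eq_or_eq_inv_apply h1 hswap φ y with h | h
    · rwa [h]
    · rw [h, hy]; simpa using hay
  split_ifs at e <;> omega

end MapSwap

lemma eq_id_or_eq_inv (hu : IsHammingIsometry u) (h1 : u 1 = 1)
    (hswap : ∀ a b : Fin n, a ≠ b → u (swap a b) = swap a b) (hn : 3 ≤ n) :
    (∀ φ, u φ = φ) ∨ ∀ φ, u φ = φ⁻¹ := by
  let x : Fin n := ⟨0, by omega⟩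
  obtain ⟨y, hyx, -⟩ := ENat.exists_ne_ne_of_three_le (by simpa using hn) x x
  obtain ⟨z, hzx, hzy⟩ := ENat.exists_ne_ne_of_three_le (by simpa using hn) x y
  have key {v : Perm (Fin n) → Perm (Fin n)} (hv : IsHammingIsometry v) (h1 : v 1 = 1)
      (hswap : ∀ a b : Fin n, a ≠ b → v (swap a b) = swap a b)
      (h : v (cycle3 x y z) = cycle3 x y z) : ∀ φ, v φ = φ :=
    hv.eq_self_of_map_cycle3_eq h1 hswap
      (hv.forall_map_cycle3_eq_of_map_cycle3_eq h1 hswap hn hyx.symm hzx.symm hzy.symm h)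
  rcases hu.map_cycle3 h1 hswap hyx.symm hzx.symm hzy.symm with h | h
  · exact .inl (key hu h1 hswap h)
  · exact .inr fun φ => inv_eq_iff_eq_inv.1 <|
      key hu.inv (by simp [h1]) (fun a b hab => by simp [hswap a b hab]) (by simp [h]) φ

theorem exists_eq_mul_mul (hu : IsHammingIsometry u) (hn : 3 ≤ n) :
    ∃ g h : Perm (Fin n), (∀ φ, u φ = g * φ * h) ∨ ∀ φ, u φ = g * φ⁻¹ * h := by
  have hu₀ := hu.mul_mul (u 1)⁻¹ 1
  obtain ⟨π, hπ⟩ := hu₀.exists_perm_map_swap (by simp) hn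
  have hv := hu₀.mul_mul π⁻¹ π
  have hvswap (a b : Fin n) (hab : a ≠ b) :
      π⁻¹ * ((u 1)⁻¹ * u (swap a b) * 1) * π = swap a b := by
    rw [hπ a b hab, swap_apply_apply]
    group
  rcases hv.eq_id_or_eq_inv (by simp) hvswap hn with h | h
  · refine ⟨u 1 * π, π⁻¹, .inl fun φ => ?_⟩
    conv_rhs => rw [← h φ]
    group
  · refine ⟨u 1 * π, π⁻¹, .inr fun φ => ?_⟩
    conv_rhs => rw [← h φ]
    group

end IsHammingIsometry

section Count

variable {n : ℕ}

def standardIsometry (g h : Perm (Fin n)) (b : Bool) : Perm (Fin n) ≃ Perm (Fin n) :=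
  (cond b (Equiv.refl _) (Equiv.inv _)).trans ((Equiv.mulLeft g).trans (Equiv.mulRight h))

lemma standardIsometry_true_apply (g h φ : Perm (Fin n)) :
    standardIsometry g h true φ = g * φ * h := rfl

lemma standardIsometry_false_apply (g h φ : Perm (Fin n)) :
    standardIsometry g h false φ = g * φ⁻¹ * h := rfl

lemma isHammingIsometry_standardIsometry (g h : Perm (Fin n)) (b : Bool) :
    IsHammingIsometry (standardIsometry g h b) := by
  cases b
  · exact IsHammingIsometry.mul_mul hdist_inv_inv g h
  · exact IsHammingIsometry.mul_mul (fun _ _ => rfl) g h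

lemma bijective_standardIsometry (hn : 3 ≤ n) :
    Function.Bijective fun x : Perm (Fin n) × Perm (Fin n) × Bool =>
      (⟨standardIsometry x.1 x.2.1 x.2.2, isHammingIsometry_standardIsometry _ _ _⟩ :
        {t : Perm (Fin n) ≃ Perm (Fin n) // IsHammingIsometry t}) := by
  have hα : 3 ≤ Nat.card (Fin n) := by simpa using hn
  constructor
  · rintro ⟨g, h, b⟩ ⟨g', h', b'⟩ hx
    have H (φ) := congrArg (fun t => t.1 φ) hx
    cases b <;> cases b' <;>
      simp only [standardIsometry_true_apply, standardIsometry_false_apply] at H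
    · obtain ⟨rfl, rfl⟩ := eq_and_eq_of_forall_mul_mul_eq hα fun φ => by simpa using H φ⁻¹
      rfl
    · exact absurd (fun φ => (H φ).symm) (not_forall_mul_mul_eq_mul_inv_mul hα)
    · exact absurd H (not_forall_mul_mul_eq_mul_inv_mul hα)
    · obtain ⟨rfl, rfl⟩ := eq_and_eq_of_forall_mul_mul_eq hα H
      rfl
  · rintro ⟨t, ht⟩
    obtain ⟨g, h, H | H⟩ := ht.exists_eq_mul_mul hn
    · exact ⟨(g, h, true), Subtype.ext (Equiv.ext fun φ => (H φ).symm)⟩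
    · exact ⟨(g, h, false), Subtype.ext (Equiv.ext fun φ => (H φ).symm)⟩

end Count

/-- For `n ≥ 3`, the group `Iso(n)` of isometries of `(Sym(n), d_H)` (the
distance-preserving bijections of `Sym(n)`) has order `2 * (n!)^2`. -/
theorem card_isometry_group (n : ℕ) (hn : 3 ≤ n) :
    Nat.card {t : Equiv.Perm (Fin n) ≃ Equiv.Perm (Fin n) //
      ∀ φ ψ, hdist (t φ) (t ψ) = hdist φ ψ} = 2 * (n.factorial) ^ 2 :=
  calc _ = Nat.card (Perm (Fin n) × Perm (Fin n) × Bool) :=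
        (Nat.card_eq_of_bijective _ (bijective_standardIsometry hn)).symm
    _ = 2 * n.factorial ^ 2 := by
      rw [Nat.card_prod, Nat.card_prod, Nat.card_perm, Nat.card_eq_fintype_card (α := Fin n),
        Fintype.card_fin, Nat.card_eq_fintype_card (α := Bool), Fintype.card_bool]
      ring
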